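/- Consider the objective F(θ_1,...,θ_M) = |Σ_{m=1}^M h_m* e^{iθ_m} + d|² for fixed h_m, d ∈ ℂ. If θ is a local maximizer of F, then for every m with h_m* \overline{(Σ_{m'≠m} h_{m'}* e^{iθ_{m'}} + d)} ≠ 0, the phase satisfies θ_m = −arg( h_m* · \overline{ Σ_{m'≠m} h_{m'}* e^{iθ_{m'}} + d } ) (mod 2π). -/

import Mathlib

/-!
Restricted to its `m`-th coordinate, `F` is `t ↦ ‖a‖² + ‖w‖² + 2 Re (z e^{it})` with `a = h_m*`,
`w` the rest of the sum and `z = a · conj w`, i.e. a constant plus `2‖z‖ cos (arg z + t)`.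
A local maximum of `cos` is a zero of `sin` that is not a global minimum (there `cos` would be
locally constant), hence lies in `2πℤ`.
-/

open Complex Real Finset

open ComplexConjugate Topology

theorem Real.cos_eq_one_of_isLocalMax {x : ℝ} (hx : IsLocalMax cos x) : cos x = 1 := by
  have hsin : sin x = 0 := by simpa using hx.deriv_eq_zero
  have hcos : cos x = 1 ∨ cos x = -1 :=
    sq_eq_one_iff.mp (by nlinarith [sin_sq_add_cos_sq x])
  refine hcos.resolve_right fun hneg => ?_
  -- a local maximum at a global minimum makes `cos` locally constant, so `-cos x = cos'' x = 0`
  have hconst : cos =ᶠ[𝓝 x] fun _ => (-1 : ℝ) := by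
    filter_upwards [hx] with y hy
    exact le_antisymm (hy.trans_eq hneg) (neg_one_le_cos y)
  have := hconst.deriv.deriv_eq
  simp only [deriv_cos', deriv.fun_neg', deriv_sin, deriv_const'] at this
  linarith

theorem Complex.re_mul_exp_ofReal_mul_I (z : ℂ) (t : ℝ) :
    (z * exp (t * I)).re = ‖z‖ * Real.cos (arg z + t) := by
  conv_lhs => rw [← norm_mul_exp_arg_mul_I z]
  rw [mul_assoc, ← exp_add, ← add_mul, ← ofReal_add, re_ofReal_mul, exp_ofReal_mul_I_re]

theorem Complex.eq_neg_arg_add_of_isLocalMax_re_mul_exp {z : ℂ} (hz : z ≠ 0) {θ : ℝ}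
    (hθ : IsLocalMax (fun t : ℝ => (z * exp (t * I)).re) θ) :
    ∃ k : ℤ, θ = -arg z + 2 * π * k := by
  have hshift : IsLocalMax (fun t => Real.cos (arg z + t)) θ := by
    filter_upwards [hθ] with t ht
    simp only [re_mul_exp_ofReal_mul_I] at ht
    exact le_of_mul_le_mul_left ht (norm_pos_iff.mpr hz)
  have hmax : IsLocalMax Real.cos (arg z + θ) := by
    have : IsLocalMax (fun t => Real.cos (arg z + t)) ((fun s => s - arg z) (arg z + θ)) := by
      simpa using hshift
    simpa [Function.comp_def] using
      this.comp_continuous (g := fun s => s - arg z) (continuous_sub_right (arg z)).continuousAt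
  obtain ⟨k, hk⟩ := (Real.cos_eq_one_iff _).mp (Real.cos_eq_one_of_isLocalMax hmax)
  exact ⟨k, by linarith⟩

theorem IsLocalMax.update {ι β : Type*} [DecidableEq ι] {X : ι → Type*}
    [∀ i, TopologicalSpace (X i)] [Preorder β] {f : (∀ i, X i) → β} {x : ∀ i, X i}
    (hf : IsLocalMax f x) (i : ι) : IsLocalMax (fun t => f (Function.update x i t)) (x i) :=
  (by simpa using hf : IsLocalMax f (Function.update x i (x i))).comp_continuous
    (continuous_const.update i continuous_id).continuousAt

theorem Finset.sum_apply_update {ι α M : Type*} [Fintype ι] [DecidableEq ι] [AddCommMonoid M]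
    (g : ι → α → M) (x : ι → α) (i : ι) (t : α) :
    ∑ j, g j (Function.update x i t j) = g i t + ∑ j ∈ univ.erase i, g j (x j) := by
  rw [← add_sum_erase _ _ (mem_univ i), Function.update_self]
  congr 1
  exact sum_congr rfl fun j hj => by rw [Function.update_of_ne (ne_of_mem_erase hj)]

theorem Complex.sq_norm_mul_exp_add (a w : ℂ) (t : ℝ) :
    ‖a * exp (t * I) + w‖ ^ 2 = ‖a‖ ^ 2 + ‖w‖ ^ 2 + 2 * (a * conj w * exp (t * I)).re := by
  rw [Complex.sq_norm, Complex.sq_norm, Complex.sq_norm, normSq_add, normSq_mul,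
    ← Complex.sq_norm (exp _), norm_exp_ofReal_mul_I]
  ring_nf

/-- First-order optimality: at a local maximizer of
`F(θ) = |Σ_m h_m* e^{iθ_m} + d|²`, every coordinate phase is aligned:
`θ_m ≡ −arg(h_m* · conj(Σ_{m'≠m} h_{m'}* e^{iθ_{m'}} + d)) (mod 2π)`. -/
theorem stmt8 (M : ℕ) (h : Fin M → ℂ) (d : ℂ) (θ : Fin M → ℝ)
    (hloc : IsLocalMax
      (fun t : Fin M → ℝ =>
        (‖∑ m, (starRingEnd ℂ) (h m) * Complex.exp (t m * Complex.I) + d‖) ^ 2)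
      θ) :
    ∀ m : Fin M,
      (starRingEnd ℂ) (h m) *
          (starRingEnd ℂ)
            (∑ m' ∈ Finset.univ.erase m,
                (starRingEnd ℂ) (h m') * Complex.exp (θ m' * Complex.I) + d) ≠ 0 →
      ∃ k : ℤ,
        θ m = -Complex.arg ((starRingEnd ℂ) (h m) *
            (starRingEnd ℂ)
              (∑ m' ∈ Finset.univ.erase m,
                  (starRingEnd ℂ) (h m') * Complex.exp (θ m' * Complex.I) + d)) +
          2 * π * k := by
  intro m hm
  set w := ∑ m' ∈ univ.erase m, conj (h m') * exp (θ m' * I) + d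
  have hexpand : ∀ t : ℝ, ‖∑ m', conj (h m') * exp (Function.update θ m t m' * I) + d‖ ^ 2
      = ‖conj (h m)‖ ^ 2 + ‖w‖ ^ 2 + 2 * (conj (h m) * conj w * exp (t * I)).re := fun t => by
    rw [sum_apply_update (fun j (s : ℝ) => conj (h j) * exp (s * I)), add_assoc,
      sq_norm_mul_exp_add]
  refine eq_neg_arg_add_of_isLocalMax_re_mul_exp hm ?_
  filter_upwards [hloc.update m] with t ht
  simp only [hexpand] at ht
  linarith
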